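/- Let c > 0 and N ≥ c² be real numbers. Then for all real x, y₁, y₂ satisfying c√N ≤ y₁ ≤ N, −N ≤ y₂ ≤ −c√N, and c√N ≤ x ≤ N, one has TP₂(x, y₁, y₂) ≥ (c² + N − √(c²N + N²)) / 2. -/

import Mathlib

/-!
Writing `a = √(x² + y₁²)`, `a' = √(x² + y₂²)`, we have `TP₂ = a (a' - x) / (2x)`, which only grows
with `y₁²` and `y₂²`; both are at least `s = c²N`, so `2 TP₂ ≥ φ(x)` with
`φ(t) = √(t² + s) (√(t² + s) - t) / t = t + s/t - √(t² + s)`.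
Rationalizing, `φ(t) = s / (t + t² / √(t² + s))` is decreasing in `t > 0`,
so `φ(x) ≥ φ(N) = c² + N - √(c²N + N²)`.
-/

/-- `TP₂(x, y₁, y₂) = √((x² + y₁²)(x² + y₂²)) / (2x) − √(x² + y₁²)/2`. -/
noncomputable def TP2 (x y₁ y₂ : ℝ) : ℝ :=
  Real.sqrt ((x ^ 2 + y₁ ^ 2) * (x ^ 2 + y₂ ^ 2)) / (2 * x) - Real.sqrt (x ^ 2 + y₁ ^ 2) / 2

open Real Set

section SqrtSqAdd

variable {s t : ℝ}

lemma sqrt_sq_add_mul_sub_div (ht : t ≠ 0) (h : 0 ≤ t ^ 2 + s) :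
    √(t ^ 2 + s) * (√(t ^ 2 + s) - t) / t = t + s / t - √(t ^ 2 + s) := by
  field_simp
  rw [mul_sub, ← sq, sq_sqrt h]
  ring

lemma add_div_sub_sqrt_eq_div (hs : 0 ≤ s) (ht : 0 < t) :
    t + s / t - √(t ^ 2 + s) = s / (t + t ^ 2 / √(t ^ 2 + s)) := by
  have ha : 0 < √(t ^ 2 + s) := sqrt_pos.2 (by positivity)
  have ha2 : √(t ^ 2 + s) ^ 2 = t ^ 2 + s := sq_sqrt (by positivity)
  field_simp
  linear_combination (-t) * ha2

lemma sq_div_sqrt_sq_add_le (hs : 0 ≤ s) {x y : ℝ} (hx : 0 < x) (hxy : x ≤ y) :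
    x ^ 2 / √(x ^ 2 + s) ≤ y ^ 2 / √(y ^ 2 + s) := by
  have hy : 0 < y := hx.trans_le hxy
  rw [div_le_div_iff₀ (sqrt_pos.2 (by positivity)) (sqrt_pos.2 (by positivity))]
  refine (pow_le_pow_iff_left₀ (by positivity) (by positivity) two_ne_zero).1 ?_
  rw [mul_pow, mul_pow, sq_sqrt (by positivity), sq_sqrt (by positivity)]
  have hx2 : x ^ 2 ≤ y ^ 2 := pow_le_pow_left₀ hx.le hxy 2
  nlinarith [mul_le_mul_of_nonneg_left hx2 (by positivity : 0 ≤ x ^ 2 * y ^ 2),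
    mul_le_mul_of_nonneg_right (pow_le_pow_left₀ hx.le hxy 4) hs]

lemma antitoneOn_add_div_sub_sqrt (hs : 0 ≤ s) :
    AntitoneOn (fun t => t + s / t - √(t ^ 2 + s)) (Ioi 0) := by
  intro x (hx : 0 < x) y (hy : 0 < y) hxy
  simp only [add_div_sub_sqrt_eq_div hs hx, add_div_sub_sqrt_eq_div hs hy]
  exact div_le_div_of_nonneg_left hs (by positivity)
    (add_le_add hxy (sq_div_sqrt_sq_add_le hs hx hxy))

end SqrtSqAdd

section TP2

variable {x y₁ y₂ s : ℝ}

lemma TP2_eq (hx : x ≠ 0) :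
    TP2 x y₁ y₂ = √(x ^ 2 + y₁ ^ 2) * (√(x ^ 2 + y₂ ^ 2) - x) / (2 * x) := by
  rw [TP2, sqrt_mul (by positivity)]
  field_simp

lemma add_div_sub_sqrt_le_two_mul_TP2 (hs : 0 ≤ s) (hx : 0 < x) (h₁ : s ≤ y₁ ^ 2)
    (h₂ : s ≤ y₂ ^ 2) : x + s / x - √(x ^ 2 + s) ≤ 2 * TP2 x y₁ y₂ := by
  have ha₁ : √(x ^ 2 + s) ≤ √(x ^ 2 + y₁ ^ 2) := sqrt_le_sqrt (by linarith)
  have ha₂ : √(x ^ 2 + s) ≤ √(x ^ 2 + y₂ ^ 2) := sqrt_le_sqrt (by linarith)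
  have hxa : x ≤ √(x ^ 2 + s) := le_sqrt_of_sq_le (by linarith)
  have hTP2 : 2 * TP2 x y₁ y₂ = √(x ^ 2 + y₁ ^ 2) * (√(x ^ 2 + y₂ ^ 2) - x) / x := by
    rw [TP2_eq hx.ne']
    field_simp
  rw [← sqrt_sq_add_mul_sub_div hx.ne' (by positivity), hTP2]
  exact div_le_div_of_nonneg_right
    (mul_le_mul ha₁ (by linarith) (by linarith) (sqrt_nonneg _)) hx.le

end TP2

theorem stmt11_general (c N : ℝ) (hc : 0 < c) (hN : c ^ 2 ≤ N) (x y₁ y₂ : ℝ)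
    (hy₁l : c * Real.sqrt N ≤ y₁)
    (hy₂u : y₂ ≤ -(c * Real.sqrt N))
    (hxl : c * Real.sqrt N ≤ x) (hxu : x ≤ N) :
    (c ^ 2 + N - Real.sqrt (c ^ 2 * N + N ^ 2)) / 2 ≤ TP2 x y₁ y₂ := by
  have hN0 : 0 < N := (by positivity : 0 < c ^ 2).trans_le hN
  have hcN : 0 < c * √N := by positivity
  have hcN_sq : (c * √N) ^ 2 = c ^ 2 * N := by rw [mul_pow, sq_sqrt hN0.le]
  have hx : 0 < x := hcN.trans_le hxl
  have h₁ : c ^ 2 * N ≤ y₁ ^ 2 := hcN_sq ▸ pow_le_pow_left₀ hcN.le hy₁l 2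
  have h₂ : c ^ 2 * N ≤ y₂ ^ 2 := by
    rw [← hcN_sq, ← neg_sq y₂]
    exact pow_le_pow_left₀ hcN.le (le_neg_of_le_neg hy₂u) 2
  have hφ := antitoneOn_add_div_sub_sqrt (by positivity : 0 ≤ c ^ 2 * N) hx hN0 hxu
  have hTP2 := add_div_sub_sqrt_le_two_mul_TP2 (by positivity) hx h₁ h₂
  simp only [mul_div_cancel_right₀ _ hN0.ne'] at hφ
  rw [add_comm (c ^ 2 * N)]
  linarith

/-- For `c > 0`, `N ≥ c²`, and all `x, y₁, y₂` with `c√N ≤ y₁ ≤ N`,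
`−N ≤ y₂ ≤ −c√N`, and `c√N ≤ x ≤ N`, one has
`TP₂(x, y₁, y₂) ≥ (c² + N − √(c²N + N²)) / 2`. -/
theorem stmt11 (c N : ℝ) (hc : 0 < c) (hN : c ^ 2 ≤ N) (x y₁ y₂ : ℝ)
    (hy₁l : c * Real.sqrt N ≤ y₁) (hy₁u : y₁ ≤ N)
    (hy₂l : -N ≤ y₂) (hy₂u : y₂ ≤ -(c * Real.sqrt N))
    (hxl : c * Real.sqrt N ≤ x) (hxu : x ≤ N) :
    (c ^ 2 + N - Real.sqrt (c ^ 2 * N + N ^ 2)) / 2 ≤ TP2 x y₁ y₂ :=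
  stmt11_general c N hc hN x y₁ y₂ hy₁l hy₂u hxl hxu
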